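/- arXiv:2505.23364 — 4 statements merged into one kernel-verified Lean document; each statement's English description precedes it below -/
import Mathlib

section
/- For the free group F_k (k ≥ 2) with standard symmetric generating set S = {a₁^±, …, a_k^±} and symmetric weight w : S → (0,∞), the volume entropy h = h(w) satisfies Σ_{i=1}^{k} 1/(1 + e^{w(aᵢ)h}) = 1/2. -/
variable {G : Type*} [Group G]

/-- The weighted word metric: `dW S w x y` is the infimum of total `w`-weights of words
over `S` representing `y⁻¹ * x`. -/
noncomputable def dW (S : Set G) (w : G → ℝ) (x y : G) : ℝ :=
  sInf {c : ℝ | ∃ l : List G, (∀ s ∈ l, s ∈ S) ∧ l.prod = y⁻¹ * x ∧ c = (l.map w).sum}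

/-- The closed ball of radius `R` about the identity in the weighted word metric. -/
noncomputable def ballW (S : Set G) (w : G → ℝ) (R : ℝ) : Set G :=
  {x : G | dW S w x 1 ≤ R}

/-- The standard symmetric generating set of the free group. -/
def stdGens (k : ℕ) : Set (FreeGroup (Fin k)) :=
  {x | ∃ i : Fin k, x = FreeGroup.of i ∨ x = (FreeGroup.of i)⁻¹}

/-!
The weighted word length of `x` is the weight of its reduced word, since cancelling letters
never increases weight; so the ball is counted by reduced words of weight at most `R`.

Let `h₀ ≥ 0` solve `∑ᵢ xᵢ = 1/2`, where `xᵢ = 1 / (1 + e^{w(aᵢ) h₀})` (intermediate value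
theorem). Give the empty word mass `1` and a reduced word `t :: L` the mass `x_t e^{-h₀ |L|}`,
which equals `(1 - x_t) e^{-h₀ |t :: L|}`. The letters that may be put in front of a reduced word
beginning with `s` are all `2k` letters but `s⁻¹`, and their `x` sum to `1 - x_s`: so the mass
of a word is the total mass of its one-letter extensions. Consequently each sphere of reduced
words, and the outer boundary of each finite subtree, has total mass `1`. Since
`1/2 ≤ 1 - x_t ≤ 1`, the spheres give `|B(R)| ≤ 2 (R / c + 1) e^{h₀ R}` with `c` the least
letter weight, while the boundary of `B(R)` consists of words of weight in `(R, R + C]`, `C`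
bounding the letter weights, and gives `e^{h₀ R} ≤ |B(R + C)|`. Hence `h₀` is the entropy.
-/

open Filter Topology Real

lemma tendsto_log_mul_add_div_atTop {a : ℝ} (ha : 0 < a) (b : ℝ) :
    Tendsto (fun x => log (a * x + b) / x) atTop (𝓝 0) := by
  have hlin : Tendsto (fun x => a * x + b) atTop atTop :=
    tendsto_atTop_add_const_right _ b (tendsto_id.const_mul_atTop ha)
  have hO : (fun x => a * x + b) =O[atTop] id :=
    ((Asymptotics.isBigO_refl id atTop).const_mul_left a).add
      (Asymptotics.isLittleO_const_id_atTop b).isBigO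
  exact ((isLittleO_log_id_atTop.comp_tendsto hlin).trans_isBigO hO).tendsto_div_nhds_zero

namespace FreeGroup

variable {α : Type*}

def weightedLength (ω : α → ℝ) (L : List (α × Bool)) : ℝ :=
  (L.map fun t => ω t.1).sum

section WeightedLength

variable {ω : α → ℝ}

@[simp]
lemma weightedLength_nil : weightedLength ω [] = 0 := rfl

@[simp]
lemma weightedLength_cons (t : α × Bool) (L : List (α × Bool)) :
    weightedLength ω (t :: L) = ω t.1 + weightedLength ω L :=
  List.sum_cons

lemma weightedLength_le_of_sublist (hω : ∀ i, 0 ≤ ω i) {L₁ L₂ : List (α × Bool)}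
    (h : L₁.Sublist L₂) : weightedLength ω L₁ ≤ weightedLength ω L₂ :=
  (h.map _).sum_le_sum (by simp [hω])

lemma mul_length_le_weightedLength {c : ℝ} (hc : ∀ i, c ≤ ω i) (L : List (α × Bool)) :
    c * L.length ≤ weightedLength ω L := by
  simpa [weightedLength, mul_comm] using
    List.card_nsmul_le_sum (L.map fun t => ω t.1) c (by simp [hc])

end WeightedLength

lemma prod_map_mk_singleton (L : List (α × Bool)) : (L.map fun t => mk [t]).prod = mk L := by
  induction L with
  | nil => rfl
  | cons t L ih => rw [List.map_cons, List.prod_cons, ih, mul_mk, List.singleton_append]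

lemma range_mk_singleton :
    Set.range (fun t : α × Bool => mk [t]) = {x | ∃ i, x = of i ∨ x = (of i)⁻¹} := by
  ext x
  constructor
  · rintro ⟨⟨i, _ | _⟩, rfl⟩
    exacts [⟨i, Or.inr (by simp [of, inv_mk, invRev])⟩, ⟨i, Or.inl rfl⟩]
  · rintro ⟨i, rfl | rfl⟩
    exacts [⟨(i, true), rfl⟩, ⟨(i, false), by simp [of, inv_mk, invRev]⟩]

def reducedBall (ω : α → ℝ) (R : ℝ) : Set (List (α × Bool)) :=
  {L | IsReduced L ∧ weightedLength ω L ≤ R}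

section WordMetric

variable [DecidableEq α]

theorem dW_one_eq_weightedLength_toWord (w : FreeGroup α → ℝ) (hw : ∀ i, 0 ≤ w (of i))
    (hw_inv : ∀ i, w (of i)⁻¹ = w (of i)) (x : FreeGroup α) :
    dW {x | ∃ i, x = of i ∨ x = (of i)⁻¹} w x 1 =
      weightedLength (fun i => w (of i)) x.toWord := by
  have hw_letter : ∀ t : α × Bool, w (mk [t]) = w (of t.1) := by
    rintro ⟨i, _ | _⟩
    · rw [← hw_inv]; simp [of, inv_mk, invRev]
    · rfl
  have hweight : ∀ L : List (α × Bool),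
      ((L.map fun t => mk [t]).map w).sum = weightedLength (fun i => w (of i)) L := by
    intro L; simp [weightedLength, hw_letter, Function.comp_def]
  refine IsLeast.csInf_eq ⟨⟨x.toWord.map fun t => mk [t], ?_, ?_, (hweight _).symm⟩, ?_⟩
  · rw [← range_mk_singleton]
    simp only [List.mem_map]
    rintro _ ⟨t, -, rfl⟩
    exact ⟨t, rfl⟩
  · rw [prod_map_mk_singleton, mk_toWord, inv_one, one_mul]
  rintro _ ⟨l, hl, hprod, rfl⟩
  rw [← range_mk_singleton] at hl
  obtain ⟨L, rfl⟩ : l ∈ Set.range (List.map fun t : α × Bool => mk [t]) := by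
    rwa [Set.range_list_map]
  rw [inv_one, one_mul, prod_map_mk_singleton] at hprod
  rw [hweight, ← hprod, toWord_mk]
  exact weightedLength_le_of_sublist hw reduce.red.sublist

theorem ncard_ballW_eq (w : FreeGroup α → ℝ) (hw : ∀ i, 0 ≤ w (of i))
    (hw_inv : ∀ i, w (of i)⁻¹ = w (of i)) (R : ℝ) :
    (ballW {x | ∃ i, x = of i ∨ x = (of i)⁻¹} w R).ncard =
      (reducedBall (fun i => w (of i)) R).ncard := by
  have hball : ballW {x | ∃ i, x = of i ∨ x = (of i)⁻¹} w R =
      toWord ⁻¹' reducedBall (fun i => w (of i)) R := by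
    ext x
    simp [ballW, reducedBall, dW_one_eq_weightedLength_toWord w hw hw_inv, isReduced_toWord]
  rw [hball, Set.ncard_preimage_of_injective_subset_range toWord_injective]
  rintro L ⟨hL, -⟩
  exact ⟨mk L, by rw [toWord_mk, hL.reduce_eq]⟩

end WordMetric

section Mass

variable (ω : α → ℝ) (h : ℝ)

noncomputable def letterMass (i : α) : ℝ := 1 / (1 + exp (ω i * h))

noncomputable def wordMass : List (α × Bool) → ℝ
  | [] => 1
  | t :: L => letterMass ω h t.1 * exp (-(h * weightedLength ω L))

variable {ω h}

lemma letterMass_pos (i : α) : 0 < letterMass ω h i := by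
  unfold letterMass; positivity

lemma letterMass_le_half (hω : ∀ i, 0 ≤ ω i) (hh : 0 ≤ h) (i : α) :
    letterMass ω h i ≤ 1 / 2 := by
  have : 1 ≤ exp (ω i * h) := one_le_exp (mul_nonneg (hω i) hh)
  unfold letterMass
  gcongr
  linarith

lemma wordMass_cons_eq (t : α × Bool) (L : List (α × Bool)) :
    wordMass ω h (t :: L) =
      (1 - letterMass ω h t.1) * exp (-(h * weightedLength ω (t :: L))) := by
  have hletter : (1 - letterMass ω h t.1) * exp (-(h * ω t.1)) = letterMass ω h t.1 := by
    have := exp_pos (ω t.1 * h)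
    rw [letterMass, mul_comm h, exp_neg]
    field_simp
    ring
  rw [wordMass, weightedLength_cons, mul_add, neg_add, exp_add, ← mul_assoc, hletter]

lemma wordMass_nonneg (L : List (α × Bool)) : 0 ≤ wordMass ω h L := by
  cases L with
  | nil => exact zero_le_one
  | cons t L => exact mul_nonneg (letterMass_pos _).le (exp_pos _).le

lemma wordMass_le_exp (L : List (α × Bool)) :
    wordMass ω h L ≤ exp (-(h * weightedLength ω L)) := by
  cases L with
  | nil => simp [wordMass]
  | cons t L =>
    rw [wordMass_cons_eq]
    have := letterMass_pos (ω := ω) (h := h) t.1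
    exact mul_le_of_le_one_left (exp_pos _).le (by linarith)

lemma exp_le_two_mul_wordMass (hω : ∀ i, 0 ≤ ω i) (hh : 0 ≤ h) (L : List (α × Bool)) :
    exp (-(h * weightedLength ω L)) ≤ 2 * wordMass ω h L := by
  cases L with
  | nil => simp [wordMass]
  | cons t L =>
    rw [wordMass_cons_eq]
    nlinarith [letterMass_le_half hω hh t.1, exp_pos (-(h * weightedLength ω (t :: L)))]

end Mass

section ReducedWords

variable [Fintype α] [DecidableEq α]

def nextLetters : List (α × Bool) → Finset (α × Bool)
  | [] => Finset.univ
  | s :: _ => Finset.univ.erase (s.1, !s.2)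

lemma isReduced_cons_iff {t : α × Bool} {L : List (α × Bool)} :
    IsReduced (t :: L) ↔ t ∈ nextLetters L ∧ IsReduced L := by
  cases L with
  | nil => simp [nextLetters, IsReduced.singleton, IsReduced.nil]
  | cons s L =>
    rw [isReduced_cons_cons]
    obtain ⟨i, a⟩ := t
    obtain ⟨j, b⟩ := s
    cases a <;> cases b <;> simp [nextLetters, eq_comm]

def extensions (L : List (α × Bool)) : Finset (List (α × Bool)) :=
  (nextLetters L).image (· :: L)

lemma pairwiseDisjoint_extensions (S : Set (List (α × Bool))) :
    S.PairwiseDisjoint extensions := by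
  intro L _ L' _ hne
  refine Finset.disjoint_left.2 fun c hc hc' => hne ?_
  simp only [extensions, Finset.mem_image] at hc hc'
  obtain ⟨t, -, rfl⟩ := hc
  obtain ⟨t', -, h⟩ := hc'
  exact (List.cons_eq_cons.1 h).2.symm

def reducedWords : ℕ → Finset (List (α × Bool))
  | 0 => {[]}
  | n + 1 => (reducedWords n).biUnion extensions

lemma mem_reducedWords {n : ℕ} {L : List (α × Bool)} :
    L ∈ reducedWords n ↔ IsReduced L ∧ L.length = n := by
  induction n generalizing L with
  | zero =>
    rw [reducedWords, Finset.mem_singleton, List.length_eq_zero_iff]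
    exact ⟨fun hL => ⟨hL ▸ IsReduced.nil, hL⟩, And.right⟩
  | succ n ih =>
    cases L with
    | nil => simp [reducedWords, extensions]
    | cons t L =>
      simp only [reducedWords, extensions, Finset.mem_biUnion, Finset.mem_image,
        List.cons.injEq, ih, isReduced_cons_iff, List.length_cons]
      constructor
      · rintro ⟨_, ⟨hred, rfl⟩, _, ht, rfl, rfl⟩
        exact ⟨⟨ht, hred⟩, rfl⟩
      · rintro ⟨⟨ht, hred⟩, hlen⟩
        exact ⟨L, ⟨hred, by omega⟩, t, ht, rfl, rfl⟩

variable {ω : α → ℝ} {h c C R : ℝ}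

lemma sum_wordMass_extensions (hroot : ∑ i, letterMass ω h i = 1 / 2) (L : List (α × Bool)) :
    ∑ u ∈ extensions L, wordMass ω h u = wordMass ω h L := by
  have hletters : ∑ t : α × Bool, letterMass ω h t.1 = 1 := by
    rw [Fintype.sum_prod_type]
    simp only [Fintype.sum_bool, ← two_mul, ← Finset.mul_sum, hroot]
    norm_num
  rw [extensions, Finset.sum_image fun _ _ _ _ => List.head_eq_of_cons_eq]
  have hcons : ∀ t,
      wordMass ω h (t :: L) = letterMass ω h t.1 * exp (-(h * weightedLength ω L)) :=
    fun _ => rfl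
  rw [Finset.sum_congr rfl fun t _ => hcons t, ← Finset.sum_mul]
  cases L with
  | nil => simp [nextLetters, hletters, wordMass]
  | cons s L =>
    rw [nextLetters, Finset.sum_erase_eq_sub (Finset.mem_univ _), hletters]
    exact (wordMass_cons_eq s L).symm

lemma sum_wordMass_biUnion_extensions (hroot : ∑ i, letterMass ω h i = 1 / 2)
    (E : Finset (List (α × Bool))) :
    ∑ u ∈ E.biUnion extensions, wordMass ω h u = ∑ L ∈ E, wordMass ω h L := by
  rw [Finset.sum_biUnion (pairwiseDisjoint_extensions _)]
  exact Finset.sum_congr rfl fun L _ => sum_wordMass_extensions hroot L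

lemma sum_wordMass_reducedWords (hroot : ∑ i, letterMass ω h i = 1 / 2) (n : ℕ) :
    ∑ L ∈ reducedWords n, wordMass ω h L = 1 := by
  induction n with
  | zero => simp [reducedWords, wordMass]
  | succ n ih => rw [reducedWords, sum_wordMass_biUnion_extensions hroot, ih]

lemma card_filter_reducedWords_le (hroot : ∑ i, letterMass ω h i = 1 / 2)
    (hω : ∀ i, 0 ≤ ω i) (hh : 0 ≤ h) (n : ℕ) (R : ℝ) :
    (((reducedWords n).filter fun L => weightedLength ω L ≤ R).card : ℝ) ≤
      2 * exp (h * R) := by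
  have hterm : ∀ L ∈ (reducedWords n).filter fun L => weightedLength ω L ≤ R,
      (1 : ℝ) ≤ 2 * exp (h * R) * wordMass ω h L := by
    intro L hL
    have hwl := (Finset.mem_filter.1 hL).2
    calc (1 : ℝ) = exp (h * R) * exp (-(h * R)) := by rw [← exp_add, add_neg_cancel, exp_zero]
      _ ≤ exp (h * R) * exp (-(h * weightedLength ω L)) := by gcongr
      _ ≤ exp (h * R) * (2 * wordMass ω h L) := by gcongr; exact exp_le_two_mul_wordMass hω hh L
      _ = 2 * exp (h * R) * wordMass ω h L := by ring
  calc (((reducedWords n).filter fun L => weightedLength ω L ≤ R).card : ℝ)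
      = ∑ L ∈ (reducedWords n).filter fun L => weightedLength ω L ≤ R, (1 : ℝ) := by simp
    _ ≤ ∑ L ∈ (reducedWords n).filter fun L => weightedLength ω L ≤ R,
          2 * exp (h * R) * wordMass ω h L := Finset.sum_le_sum hterm
    _ ≤ ∑ L ∈ reducedWords n, 2 * exp (h * R) * wordMass ω h L :=
        Finset.sum_le_sum_of_subset_of_nonneg (Finset.filter_subset _ _)
          fun L _ _ => mul_nonneg (by positivity) (wordMass_nonneg L)
    _ = 2 * exp (h * R) := by rw [← Finset.mul_sum, sum_wordMass_reducedWords hroot, mul_one]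

lemma reducedBall_subset (hc : 0 < c) (hωc : ∀ i, c ≤ ω i) (R : ℝ) :
    reducedBall ω R ⊆ ↑((Finset.range (⌊R / c⌋₊ + 1)).biUnion
      fun n => (reducedWords n).filter fun L => weightedLength ω L ≤ R) := by
  rintro L ⟨hred, hwl⟩
  rw [Finset.mem_coe, Finset.mem_biUnion]
  refine ⟨L.length, Finset.mem_range.2 (Nat.lt_succ_of_le (Nat.le_floor ?_)),
    Finset.mem_filter.2 ⟨mem_reducedWords.2 ⟨hred, rfl⟩, hwl⟩⟩
  rw [le_div_iff₀ hc]
  linarith [mul_length_le_weightedLength hωc L]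

lemma reducedBall_finite (hc : 0 < c) (hωc : ∀ i, c ≤ ω i) (R : ℝ) :
    (reducedBall ω R).Finite :=
  (Finset.finite_toSet _).subset (reducedBall_subset hc hωc R)

lemma ncard_reducedBall_le (hroot : ∑ i, letterMass ω h i = 1 / 2) (hc : 0 < c)
    (hωc : ∀ i, c ≤ ω i) (hh : 0 ≤ h) (hR : 0 ≤ R) :
    ((reducedBall ω R).ncard : ℝ) ≤ 2 * (R / c + 1) * exp (h * R) := by
  have hω : ∀ i, 0 ≤ ω i := fun i => hc.le.trans (hωc i)
  calc ((reducedBall ω R).ncard : ℝ)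
      ≤ ((Finset.range (⌊R / c⌋₊ + 1)).biUnion
          fun n => (reducedWords n).filter fun L => weightedLength ω L ≤ R).card := by
        rw [← Set.ncard_coe_finset]
        exact_mod_cast Set.ncard_le_ncard (reducedBall_subset hc hωc R) (Finset.finite_toSet _)
    _ ≤ ∑ n ∈ Finset.range (⌊R / c⌋₊ + 1),
          (((reducedWords n).filter fun L => weightedLength ω L ≤ R).card : ℝ) := by
        exact_mod_cast Finset.card_biUnion_le
    _ ≤ ∑ _n ∈ Finset.range (⌊R / c⌋₊ + 1), 2 * exp (h * R) :=
        Finset.sum_le_sum fun n _ => card_filter_reducedWords_le hroot hω hh n R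
    _ = (⌊R / c⌋₊ + 1) * (2 * exp (h * R)) := by simp
    _ ≤ (R / c + 1) * (2 * exp (h * R)) := by gcongr; exact Nat.floor_le (by positivity)
    _ = 2 * (R / c + 1) * exp (h * R) := by ring

def outerBoundary (E : Finset (List (α × Bool))) : Finset (List (α × Bool)) :=
  (E.biUnion extensions).filter fun u => u ∉ E

lemma sum_wordMass_outerBoundary (hroot : ∑ i, letterMass ω h i = 1 / 2)
    {E : Finset (List (α × Bool))} (hnil : [] ∈ E)
    (hE : ∀ t L, t :: L ∈ E → IsReduced (t :: L) ∧ L ∈ E) :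
    ∑ u ∈ outerBoundary E, wordMass ω h u = 1 := by
  have hinner : (E.biUnion extensions).filter (· ∈ E) = E.erase [] := by
    ext u
    simp only [Finset.mem_filter, Finset.mem_biUnion, extensions, Finset.mem_image,
      Finset.mem_erase]
    constructor
    · rintro ⟨⟨L, -, t, -, rfl⟩, hu⟩
      exact ⟨List.cons_ne_nil _ _, hu⟩
    · rintro ⟨hne, hu⟩
      obtain ⟨t, L, rfl⟩ := List.exists_cons_of_ne_nil hne
      obtain ⟨hred, hL⟩ := hE t L hu
      exact ⟨⟨L, hL, t, (isReduced_cons_iff.1 hred).1, rfl⟩, hu⟩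
  have hsplit :=
    Finset.sum_filter_add_sum_filter_not (E.biUnion extensions) (· ∈ E) (wordMass ω h)
  rw [hinner, sum_wordMass_biUnion_extensions hroot, ← Finset.add_sum_erase E _ hnil] at hsplit
  have hroot_mass : wordMass ω h [] = 1 := rfl
  rw [outerBoundary]
  linarith

lemma exp_le_ncard_reducedBall (hroot : ∑ i, letterMass ω h i = 1 / 2) (hc : 0 < c)
    (hωc : ∀ i, c ≤ ω i) (hh : 0 ≤ h) (hωC : ∀ i, ω i ≤ C) (hR : 0 ≤ R) :
    exp (h * R) ≤ (reducedBall ω (R + C)).ncard := by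
  set E := (reducedBall_finite hc hωc R).toFinset
  have hmemE : ∀ L, L ∈ E ↔ IsReduced L ∧ weightedLength ω L ≤ R := by
    simp [E, reducedBall]
  have hmass := sum_wordMass_outerBoundary hroot (E := E) ((hmemE []).2 ⟨IsReduced.nil, hR⟩)
    fun t L hL => by
      obtain ⟨hred, hwl⟩ := (hmemE _).1 hL
      rw [weightedLength_cons] at hwl
      have := hc.trans_le (hωc t.1)
      exact ⟨hred, (hmemE L).2 ⟨(isReduced_cons_iff.1 hred).2, by linarith⟩⟩
  have hbdry : ∀ u ∈ outerBoundary E,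
      u ∈ reducedBall ω (R + C) ∧ wordMass ω h u ≤ exp (-(h * R)) := by
    intro u hu
    simp only [outerBoundary, Finset.mem_filter, Finset.mem_biUnion, extensions,
      Finset.mem_image] at hu
    obtain ⟨⟨L, hL, t, ht, rfl⟩, huE⟩ := hu
    rw [hmemE] at hL huE
    have hred : IsReduced (t :: L) := isReduced_cons_iff.2 ⟨ht, hL.1⟩
    have hgt : R < weightedLength ω (t :: L) := lt_of_not_ge fun hle => huE ⟨hred, hle⟩
    refine ⟨⟨hred, ?_⟩, (wordMass_le_exp _).trans (exp_le_exp.2 ?_)⟩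
    · rw [weightedLength_cons]; linarith [hωC t.1, hL.2]
    · exact neg_le_neg (mul_le_mul_of_nonneg_left hgt.le hh)
  calc exp (h * R) = exp (h * R) * ∑ u ∈ outerBoundary E, wordMass ω h u := by
        rw [hmass, mul_one]
    _ ≤ exp (h * R) * ∑ _u ∈ outerBoundary E, exp (-(h * R)) := by
        gcongr with u hu; exact (hbdry u hu).2
    _ = (outerBoundary E).card := by
        rw [Finset.sum_const, nsmul_eq_mul, mul_left_comm, ← exp_add, add_neg_cancel, exp_zero,
          mul_one]
    _ ≤ (reducedBall ω (R + C)).ncard := by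
        rw [← Set.ncard_coe_finset]
        exact_mod_cast Set.ncard_le_ncard (fun u hu => (hbdry u hu).1)
          (reducedBall_finite hc hωc _)

end ReducedWords

section Entropy

variable [Fintype α] {ω : α → ℝ}

lemma exists_sum_letterMass_eq_half [Nonempty α] (hω : ∀ i, 0 < ω i) :
    ∃ h, 0 ≤ h ∧ ∑ i, letterMass ω h i = 1 / 2 := by
  have hcont : Continuous fun h => ∑ i, letterMass ω h i :=
    continuous_finsetSum _ fun i _ =>
      continuous_const.div (by fun_prop) fun h => (add_pos one_pos (exp_pos _)).ne'
  have hzero : 1 / 2 ≤ ∑ i, letterMass ω 0 i := by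
    simp only [letterMass, mul_zero, exp_zero, Finset.sum_const, Finset.card_univ]
    have : (1 : ℝ) ≤ Fintype.card α := by exact_mod_cast Fintype.card_pos
    rw [nsmul_eq_mul]
    linarith
  have hlim : Tendsto (fun h => ∑ i, letterMass ω h i) atTop (𝓝 0) := by
    have hterm : ∀ i, Tendsto (fun h => letterMass ω h i) atTop (𝓝 0) := fun i => by
      simpa [letterMass, Pi.inv_def] using (tendsto_atTop_add_const_left _ 1
        (tendsto_exp_atTop.comp (tendsto_id.const_mul_atTop (hω i)))).inv_tendsto_atTop
    simpa using tendsto_finsetSum Finset.univ fun i _ => hterm i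
  obtain ⟨M, hM, hM0⟩ :=
    ((hlim.eventually (ge_mem_nhds (by norm_num : (0 : ℝ) < 1 / 2))).and
      (eventually_ge_atTop 0)).exists
  obtain ⟨h, ⟨hh, -⟩, hroot⟩ :=
    intermediate_value_Icc' hM0 hcont.continuousOn ⟨hM, hzero⟩
  exact ⟨h, hh, hroot⟩

theorem tendsto_log_ncard_reducedBall_div [DecidableEq α] {h : ℝ} (hω : ∀ i, 0 < ω i)
    (hh : 0 ≤ h) (hroot : ∑ i, letterMass ω h i = 1 / 2) :
    Tendsto (fun R => log (reducedBall ω R).ncard / R) atTop (𝓝 h) := by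
  obtain ⟨c, hc, hωc⟩ : ∃ c > 0, ∀ i, c ≤ ω i := by
    cases isEmpty_or_nonempty α
    · exact ⟨1, one_pos, fun i => isEmptyElim i⟩
    · obtain ⟨i₀, hi₀⟩ := Finite.exists_min ω
      exact ⟨ω i₀, hω i₀, hi₀⟩
  have hωC : ∀ i, ω i ≤ ∑ j, ω j := fun i =>
    Finset.single_le_sum (fun j _ => (hω j).le) (Finset.mem_univ i)
  have hlower : Tendsto (fun R => h - h * (∑ j, ω j) / R) atTop (𝓝 h) := by
    simpa using (tendsto_const_nhds (x := h)).sub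
      ((tendsto_const_nhds (x := h * ∑ j, ω j)).div_atTop tendsto_id)
  have hupper : Tendsto (fun R => log (2 / c * R + 2) / R + h) atTop (𝓝 h) := by
    simpa using (tendsto_log_mul_add_div_atTop (by positivity : 0 < 2 / c) 2).add_const h
  refine tendsto_of_tendsto_of_tendsto_of_le_of_le' hlower hupper ?_ ?_
  · filter_upwards [eventually_ge_atTop (∑ j, ω j), eventually_gt_atTop 0] with R hRC hR
    have hexp := exp_le_ncard_reducedBall hroot hc hωc hh hωC (sub_nonneg.2 hRC)
    rw [sub_add_cancel] at hexp
    rw [le_div_iff₀ hR, sub_mul, div_mul_cancel₀ _ hR.ne', ← mul_sub, ← log_exp (h * _)]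
    exact log_le_log (exp_pos _) hexp
  · filter_upwards [eventually_gt_atTop 0] with R hR
    have hpos : 0 < ((reducedBall ω R).ncard : ℝ) := by
      exact_mod_cast (Set.ncard_pos (reducedBall_finite hc hωc R)).2
        ⟨[], IsReduced.nil, by simpa using hR.le⟩
    rw [div_le_iff₀ hR, add_mul, div_mul_cancel₀ _ hR.ne']
    calc log (reducedBall ω R).ncard ≤ log (2 * (R / c + 1) * exp (h * R)) :=
          log_le_log hpos (ncard_reducedBall_le hroot hc hωc hh hR.le)
      _ = log (2 / c * R + 2) + h * R := by
          rw [log_mul (by positivity) (exp_pos _).ne', log_exp]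
          congr 2
          ring

end Entropy

end FreeGroup

theorem stmt4 (k : ℕ) (hk : 2 ≤ k) (w : FreeGroup (Fin k) → ℝ)
    (hwpos : ∀ s ∈ stdGens k, 0 < w s)
    (hwsym : ∀ i : Fin k, w (FreeGroup.of i)⁻¹ = w (FreeGroup.of i))
    (h : ℝ)
    (hent : Filter.Tendsto
      (fun R : ℝ => Real.log (((ballW (stdGens k) w R).ncard : ℝ)) / R)
      Filter.atTop (nhds h)) :
    ∑ i : Fin k, 1 / (1 + Real.exp (w (FreeGroup.of i) * h)) = 1 / 2 := by
  have : Nonempty (Fin k) := ⟨⟨0, by omega⟩⟩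
  have hω : ∀ i, 0 < w (FreeGroup.of i) := fun i => hwpos _ ⟨i, Or.inl rfl⟩
  obtain ⟨h₀, hh₀, hroot⟩ := FreeGroup.exists_sum_letterMass_eq_half hω
  have hball : ∀ R, (ballW (stdGens k) w R).ncard =
      (FreeGroup.reducedBall (fun i => w (FreeGroup.of i)) R).ncard :=
    FreeGroup.ncard_ballW_eq w (fun i => (hω i).le) hwsym
  have hent₀ := FreeGroup.tendsto_log_ncard_reducedBall_div hω hh₀ hroot
  simp only [← hball] at hent₀
  rw [tendsto_nhds_unique hent hent₀]
  exact hroot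
end

section
/- Let θ : [0, h₁] → ℝ be a convex function with θ(0) = h₀ and θ(h₁) = 0, where h₀, h₁ > 0. Suppose h_t > 0 satisfies (1−t)·h_t = θ(t·h_t) for some t ∈ (0,1) with t·h_t ∈ [0, h₁]. Then h_t ≤ h₀h₁/(t·h₀ + (1−t)·h₁), and hence h_t ≤ (1−t)h₀ + t·h₁. Moreover, if h_t = (1−t)h₀ + t·h₁, then h₀ = h₁ and θ is affine on [0,h₁]. -/
/-!
Convexity keeps θ below its chord `x ↦ h₀ - (h₀ / h₁) x` on `[0, h₁]`. At the point `t h_t` the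
relation `(1 - t) h_t = θ (t h_t)` then gives `h_t (t h₀ + (1 - t) h₁) ≤ h₀ h₁`, a bound by a
weighted harmonic mean of `h₀, h₁`, which is at most the weighted arithmetic mean: the gap is
governed by `t (1 - t) (h₀ - h₁)²`. In the equality case `h₀ = h₁`, and θ meets its chord at the
interior point `t h₁`; a convex function below a concave one that touches it at an interior point
of an interval coincides with it on the whole interval.
-/

open Set

section ConvexOnIcc

variable {𝕜 β : Type*} [Field 𝕜] [LinearOrder 𝕜] [IsStrictOrderedRing 𝕜]
  [AddCommGroup β] [LinearOrder β] [IsOrderedAddMonoid β] [Module 𝕜 β] [IsStrictOrderedModule 𝕜 β]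
  {a b : 𝕜} {f g : 𝕜 → β}

theorem ConvexOn.le_on_Icc_of_le_endpoints (hf : ConvexOn 𝕜 (Icc a b) f)
    (hg : ConcaveOn 𝕜 (Icc a b) g) (ha : f a ≤ g a) (hb : f b ≤ g b) :
    ∀ x ∈ Icc a b, f x ≤ g x := by
  intro x hx
  have hab : a ≤ b := hx.1.trans hx.2
  have := (hf.sub hg).le_max_of_mem_Icc (left_mem_Icc.2 hab) (right_mem_Icc.2 hab) hx
  exact sub_nonpos.1 (this.trans (max_le (sub_nonpos.2 ha) (sub_nonpos.2 hb)))

theorem ConvexOn.eqOn_Icc_of_le_of_eq_at_interior (hf : ConvexOn 𝕜 (Icc a b) f)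
    (hg : ConcaveOn 𝕜 (Icc a b) g) (hfg : ∀ x ∈ Icc a b, f x ≤ g x) {s : 𝕜} (hs : s ∈ Ioo a b)
    (hfgs : f s = g s) : EqOn f g (Icc a b) := by
  have hφ := hf.sub hg
  have hab : a ≤ b := (hs.1.trans hs.2).le
  have hφs : (f - g) s = 0 := sub_eq_zero.2 hfgs
  intro x hx
  refine le_antisymm (hfg x hx) (sub_nonneg.1 ?_)
  show 0 ≤ (f - g) x
  rw [← hφs]
  rcases le_or_gt x s with hxs | hsx
  · exact hφ.le_left_of_right_le'' hx (right_mem_Icc.2 hab) hxs hs.2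
      (hφs ▸ sub_nonpos.2 (hfg b (right_mem_Icc.2 hab)))
  · exact hφ.le_right_of_left_le'' (left_mem_Icc.2 hab) hx hs.1 hsx.le
      (hφs ▸ sub_nonpos.2 (hfg a (left_mem_Icc.2 hab)))

end ConvexOnIcc

theorem weighted_mean_mul_weighted_mean {R : Type*} [CommRing R] (a b t : R) :
    ((1 - t) * a + t * b) * (t * a + (1 - t) * b) = a * b + t * (1 - t) * (a - b) ^ 2 := by
  ring

theorem stmt13_general (h0 h1 : ℝ) (hh0 : 0 < h0) (hh1 : 0 < h1)
    (θ : ℝ → ℝ) (hconv : ConvexOn ℝ (Set.Icc 0 h1) θ)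
    (hθ0 : θ 0 = h0) (hθ1 : θ h1 = 0)
    (t ht_ : ℝ) (ht : t ∈ Set.Ioo (0 : ℝ) 1)
    (hmem : t * ht_ ∈ Set.Icc 0 h1)
    (heq : (1 - t) * ht_ = θ (t * ht_)) :
    ht_ ≤ h0 * h1 / (t * h0 + (1 - t) * h1) ∧
    ht_ ≤ (1 - t) * h0 + t * h1 ∧
    (ht_ = (1 - t) * h0 + t * h1 →
      h0 = h1 ∧ ∀ x ∈ Set.Icc (0 : ℝ) h1, θ x = h0 - (h0 / h1) * x) := by
  obtain ⟨ht0, ht1⟩ := ht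
  set chord : ℝ → ℝ := fun x => h0 - h0 / h1 * x
  have hchord : ConcaveOn ℝ (Icc 0 h1) chord :=
    ⟨convex_Icc 0 h1, fun x _ y _ a b _ _ hab => le_of_eq <| by
      simp only [chord, smul_eq_mul]; linear_combination h0 * hab⟩
  have hθ_le : ∀ x ∈ Icc 0 h1, θ x ≤ chord x :=
    hconv.le_on_Icc_of_le_endpoints hchord (by simp [chord, hθ0])
      (by simp [chord, hθ1, hh1.ne'])
  have hD : 0 < t * h0 + (1 - t) * h1 := by
    have := sub_pos.2 ht1
    positivity
  have hkey : ht_ * (t * h0 + (1 - t) * h1) ≤ h0 * h1 := by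
    have h : (1 - t) * ht_ ≤ h0 - h0 / h1 * (t * ht_) := heq ▸ hθ_le _ hmem
    calc ht_ * (t * h0 + (1 - t) * h1) = ((1 - t) * ht_ + h0 / h1 * (t * ht_)) * h1 := by
          field_simp; ring
      _ ≤ h0 * h1 := by gcongr; linarith
  have hmeans := weighted_mean_mul_weighted_mean h0 h1 t
  have hspread : 0 ≤ t * (1 - t) * (h0 - h1) ^ 2 := by
    have := sub_pos.2 ht1
    positivity
  refine ⟨(le_div_iff₀ hD).2 hkey, ?_, fun hAM => ?_⟩
  · exact le_of_mul_le_mul_right (by linarith) hD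
  have h01 : h0 = h1 := by
    have : t * (1 - t) * (h0 - h1) ^ 2 = 0 := by linarith [hAM ▸ hkey]
    simpa [ht0.ne', (sub_pos.2 ht1).ne', sub_eq_zero] using this
  refine ⟨h01, hconv.eqOn_Icc_of_le_of_eq_at_interior hchord hθ_le (s := t * h1) ?_ ?_⟩
  · exact ⟨by positivity, mul_lt_of_lt_one_left hh1 ht1⟩
  · have hht : ht_ = h1 := by rw [hAM, h01]; ring
    rw [hht] at heq
    rw [← heq]
    show (1 - t) * h1 = h0 - h0 / h1 * (t * h1)
    rw [h01]
    field_simp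

theorem stmt13 (h0 h1 : ℝ) (hh0 : 0 < h0) (hh1 : 0 < h1)
    (θ : ℝ → ℝ) (hconv : ConvexOn ℝ (Set.Icc 0 h1) θ)
    (hθ0 : θ 0 = h0) (hθ1 : θ h1 = 0)
    (t ht_ : ℝ) (ht : t ∈ Set.Ioo (0 : ℝ) 1) (hpos : 0 < ht_)
    (hmem : t * ht_ ∈ Set.Icc 0 h1)
    (heq : (1 - t) * ht_ = θ (t * ht_)) :
    ht_ ≤ h0 * h1 / (t * h0 + (1 - t) * h1) ∧
    ht_ ≤ (1 - t) * h0 + t * h1 ∧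
    (ht_ = (1 - t) * h0 + t * h1 →
      h0 = h1 ∧ ∀ x ∈ Set.Icc (0 : ℝ) h1, θ x = h0 - (h0 / h1) * x) :=
  stmt13_general h0 h1 hh0 hh1 θ hconv hθ0 hθ1 t ht_ ht hmem heq
end

section
/- Let G = ⟨A | R⟩ be a symmetrized, cyclically reduced presentation satisfying C'(λ) small cancellation with λ ≤ 1/8, satisfying the even distribution condition: for every r ∈ R and every a ∈ A, every subword u of r with |u| = ⌈4λ|r|⌉ satisfies #_{a^±}(u) < (1/2)#_{a^±}(r). Then for every r ∈ R, every subword u₃ of r with |u₃| ≤ 4λ|r| and every symmetric weight w on S = A ∪ A⁻¹, the complementary subword u₂ (so that u₂u₃ is a cyclic permutation of r) satisfies |u₂|_w > |u₃|_w. -/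
variable {α : Type*} [DecidableEq α]

/-- Letters over the alphabet `A ∪ A⁻¹` are modeled as `α × Bool`; inversion flips the
boolean. -/
def linv (x : α × Bool) : α × Bool := (x.1, !x.2)

/-- Formal inverse of a word. -/
def wordInv (l : List (α × Bool)) : List (α × Bool) := l.reverse.map linv

/-- A word is reduced if no letter is immediately followed by its inverse. -/
def Reduced (l : List (α × Bool)) : Prop := l.Chain' (fun x y => y ≠ linv x)

/-- A word is cyclically reduced if it is reduced and the first letter is not the inverse
of the last letter. -/
def CyclicallyReduced (l : List (α × Bool)) : Prop :=
  Reduced l ∧ ∀ x y, l.head? = some x → l.getLast? = some y → x ≠ linv y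

/-- `countA a v` is `#_{a^±}(v)`, the number of occurrences of `a` or `a⁻¹` in `v`. -/
def countA (a : α) (l : List (α × Bool)) : ℕ := (l.filter (fun x => x.1 = a)).length

lemma countA_append (a : α) (l₁ l₂ : List (α × Bool)) :
    countA a (l₁ ++ l₂) = countA a l₁ + countA a l₂ := by
  simp [countA, List.filter_append]

lemma countA_le_of_sublist (a : α) {l₁ l₂ : List (α × Bool)} (h : List.Sublist l₁ l₂) :
    countA a l₁ ≤ countA a l₂ :=
  (h.filter _).length_le

lemma countA_eq_count (a : α) (l : List (α × Bool)) :
    countA a l = (l.map Prod.fst).count a := by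
  induction l with
  | nil => rfl
  | cons x t ih =>
    rw [List.map_cons, List.count_cons]
    by_cases h : x.1 = a
    · simp only [countA, List.filter_cons, h]
      simp [← ih, countA, h]
    · simp only [countA, List.filter_cons]
      simp [← ih, countA, h, Ne.symm h]

lemma sum_map_w_eq (w : α × Bool → ℝ) (hwsym : ∀ x, w (linv x) = w x)
    (l : List (α × Bool)) :
    (l.map w).sum = ((l.map Prod.fst).map (fun a => w (a, true))).sum := by
  rw [List.map_map]
  congr 1
  apply List.map_congr_left
  intro x _
  rcases x with ⟨a, b⟩
  cases b
  · have := hwsym (a, true); simpa [linv] using this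
  · rfl

lemma sum_lt_sum_counts (v : α → ℝ) (hv : ∀ a, 0 < v a) (m₁ m₂ : List α)
    (hle : ∀ a, m₁.count a ≤ m₂.count a) (hlt : ∃ a, m₁.count a < m₂.count a) :
    (m₁.map v).sum < (m₂.map v).sum := by
  have hM : (m₁ : Multiset α) ≤ (m₂ : Multiset α) := by
    rw [Multiset.le_iff_count]
    intro a
    simpa using hle a
  set D : Multiset α := (m₂ : Multiset α) - (m₁ : Multiset α) with hD
  have hsplit : (m₂ : Multiset α) = (m₁ : Multiset α) + D := (add_tsub_cancel_of_le hM).symm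
  have hDne : D ≠ 0 := by
    intro h
    obtain ⟨a, ha⟩ := hlt
    have : ((m₂ : Multiset α)).count a = ((m₁ : Multiset α)).count a := by
      rw [hsplit, h]; simp
    simp only [Multiset.coe_count] at this
    omega
  have hs1 : (m₁.map v).sum = (((m₁ : Multiset α)).map v).sum := by simp
  have hs2 : (m₂.map v).sum = (((m₂ : Multiset α)).map v).sum := by simp
  rw [hs1, hs2, hsplit, Multiset.map_add, Multiset.sum_add]
  have hpos : 0 < (D.map v).sum := by
    obtain ⟨x, hx⟩ := Multiset.exists_mem_of_ne_zero hDne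
    have hmem : v x ∈ D.map v := Multiset.mem_map_of_mem v hx
    have hle' : v x ≤ (D.map v).sum :=
      Multiset.single_le_sum (by intro y hy; obtain ⟨a, _, rfl⟩ := Multiset.mem_map.1 hy; exact (hv a).le) _ hmem
    exact lt_of_lt_of_le (hv x) hle'
  linarith

theorem stmt15 (R : Set (List (α × Bool))) (lam : ℝ) (hlampos : 0 < lam)
    (hlam : lam ≤ 1 / 8)
    (hne : ∀ r ∈ R, r ≠ [])
    (hcyc : ∀ r ∈ R, CyclicallyReduced r)
    -- `R` is symmetrized: closed under cyclic permutations and inverses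
    (hrot : ∀ r ∈ R, ∀ n : ℕ, r.rotate n ∈ R)
    (hinv : ∀ r ∈ R, wordInv r ∈ R)
    -- the `C'(λ)` small cancellation condition: pieces are short in every relator
    (hC : ∀ u r₁ r₂ : List (α × Bool), r₁ ∈ R → r₂ ∈ R → r₁ ≠ r₂ → u ≠ [] →
      u <+: r₁ → u <+: r₂ → ∀ r ∈ R, u <:+: r → (u.length : ℝ) < lam * r.length)
    -- the even distribution condition
    (hED : ∀ r ∈ R, ∀ a : α, ∀ u : List (α × Bool), u <:+: r →
      u.length = ⌈4 * lam * (r.length : ℝ)⌉₊ →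
      (countA a u : ℝ) < (1 / 2) * countA a r)
    (w : α × Bool → ℝ) (hwpos : ∀ x, 0 < w x) (hwsym : ∀ x, w (linv x) = w x) :
    ∀ r ∈ R, ∀ u₂ u₃ : List (α × Bool), ∀ n : ℕ, u₂ ++ u₃ = r.rotate n →
      (u₃.length : ℝ) ≤ 4 * lam * r.length → (u₃.map w).sum < (u₂.map w).sum := by
  intro r hr u₂ u₃ n h23 hlen
  set r' := r.rotate n with hr'def
  have hr' : r' ∈ R := hrot r hr n
  have hrne : r ≠ [] := hne r hr
  have hr'len : r'.length = r.length := List.length_rotate r n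
  have hrlen1 : 1 ≤ r.length := List.length_pos_iff.2 hrne
  have hr'ne : r' ≠ [] := by
    intro h
    have : r'.length = 0 := by rw [h]; rfl
    omega
  by_cases h3 : u₃ = []
  · subst h3
    simp only [List.map_nil, List.sum_nil]
    have hu2 : u₂ ≠ [] := by
      intro h; apply hr'ne; rw [← h23, h]; rfl
    exact List.sum_pos _ (by intro x hx; obtain ⟨a, _, rfl⟩ := List.mem_map.1 hx; exact hwpos a)
      (by simpa using hu2)
  · set N := ⌈4 * lam * (r.length : ℝ)⌉₊ with hNdef
    have hNle : N ≤ r'.length := by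
      rw [hr'len]
      apply Nat.ceil_le.2
      have : (1 : ℝ) ≤ (r.length : ℝ) := by exact_mod_cast hrlen1
      nlinarith
    have h3N : u₃.length ≤ N := by
      have h1 : (u₃.length : ℝ) ≤ (N : ℝ) := hlen.trans (Nat.le_ceil _)
      exact_mod_cast h1
    set u := r'.drop (r'.length - N) with hudef
    have hu_suffix : u <:+ r' := List.drop_suffix _ _
    have hu_len : u.length = N := by
      rw [hudef, List.length_drop]
      omega
    have s₃ : u₃ <:+ r' := ⟨u₂, h23⟩
    have h3u : u₃ <:+ u := by
      rw [← List.reverse_prefix] at s₃ hu_suffix ⊢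
      exact List.prefix_of_prefix_length_le s₃ hu_suffix (by simpa using h3N.trans hu_len.ge)
    have key : ∀ a, countA a u₃ < countA a u₂ := by
      intro a
      have hed := hED r' hr' a u hu_suffix.isInfix (by rw [hu_len, hNdef, hr'len])
      have h1 : countA a u₃ ≤ countA a u := countA_le_of_sublist a h3u.sublist
      have h2 : countA a r' = countA a u₂ + countA a u₃ := by rw [← h23, countA_append]
      rw [h2] at hed
      have h1' : (countA a u₃ : ℝ) ≤ (countA a u : ℝ) := by exact_mod_cast h1
      have : (countA a u₃ : ℝ) < (countA a u₂ : ℝ) := by push_cast at hed ⊢; linarith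
      exact_mod_cast this
    rw [sum_map_w_eq w hwsym u₃, sum_map_w_eq w hwsym u₂]
    apply sum_lt_sum_counts _ (fun a => hwpos _)
    · intro a
      rw [← countA_eq_count, ← countA_eq_count]
      exact (key a).le
    · obtain ⟨x, hx⟩ := List.exists_mem_of_ne_nil u₃ h3
      exact ⟨x.1, by rw [← countA_eq_count, ← countA_eq_count]; exact key x.1⟩
end

section
/- Let Ω be a finite alphabet with integer weight w : Ω → ℕ₊, let F be a reduced set of forbidden words (no word in F contains another as a subword), and for n ≥ 0 let f(n) count words of total weight n containing no forbidden subword (f(0) = 1) and f_W(n) count words of total weight n ending in W ∈ F and containing no other forbidden subword. Then for all n ≥ 1: f(n) + Σ_{W∈F} f_W(n) = Σ_{s∈Ω} f(n − w(s)), where f of a negative argument is 0. -/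
/-!
Both sides count the words of weight `n` whose initial segment (everything but the last
letter) avoids `F`. Splitting such a word by its last letter `s` gives the right-hand side.
For the left-hand side: a forbidden occurrence in such a word must end at its last letter, so
either the word avoids `F`, or some `W ∈ F` is a suffix of it; two forbidden suffixes would be
nested, so by reducedness this `W` is unique and is the only occurrence.
-/

variable {Ω : Type*} [Fintype Ω] [DecidableEq Ω]

/-- The total weight of a word. -/
def wt (w : Ω → ℕ) (l : List Ω) : ℕ := (l.map w).sum

/-- `fCount w F n` counts words of total weight `n` containing no forbidden subword. -/
noncomputable def fCount (w : Ω → ℕ) (F : Finset (List Ω)) (n : ℕ) : ℕ :=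
  {l : List Ω | wt w l = n ∧ ∀ V ∈ F, ¬ V <:+: l}.ncard

/-- `fWCount w F W n` counts words of total weight `n` ending in `W` whose only occurrence
of a forbidden subword is that final copy of `W`. -/
noncomputable def fWCount (w : Ω → ℕ) (F : Finset (List Ω)) (W : List Ω) (n : ℕ) : ℕ :=
  {l : List Ω | wt w l = n ∧ W <:+ l ∧
    ∀ V ∈ F, ∀ p s : List Ω, l = p ++ V ++ s → V = W ∧ s = []}.ncard

variable {α : Type*}

section Weight

variable (w : α → ℕ)

@[simp]
theorem wt_nil : wt w [] = 0 := rfl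

@[simp]
theorem wt_append (l₁ l₂ : List α) : wt w (l₁ ++ l₂) = wt w l₁ + wt w l₂ := by
  simp [wt]

@[simp]
theorem wt_singleton (a : α) : wt w [a] = w a := by
  simp [wt]

variable {w}

theorem length_le_wt (hw : ∀ a, 0 < w a) (l : List α) : l.length ≤ wt w l := by
  induction l with
  | nil => rfl
  | cons a l ih =>
    have := hw a
    simp only [wt, List.map_cons, List.sum_cons, List.length_cons] at *
    omega

theorem finite_setOf_wt_eq [Finite α] (hw : ∀ a, 0 < w a) (n : ℕ) :
    {l : List α | wt w l = n}.Finite :=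
  (List.finite_length_le α n).subset fun l hl => hl ▸ length_le_wt hw l

theorem ncard_setOf_wt_add_eq (P : List α → Prop) (k n : ℕ) :
    {l | wt w l + k = n ∧ P l}.ncard = if k ≤ n then {l | wt w l = n - k ∧ P l}.ncard else 0 := by
  split_ifs with hk
  · congr 1
    ext l
    exact and_congr_left fun _ => by omega
  · convert Set.ncard_empty (List α)
    ext l
    simp only [Set.mem_ofPred_eq, Set.mem_empty_iff_false, iff_false, not_and]
    omega

end Weight

section Occurrences

variable (F : Finset (List α))

-- `fCount w F n` and `fWCount w F W n` count the words of weight `n` satisfying `Avoids F`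
-- and `EndsOnlyIn F W` respectively.
def Avoids (l : List α) : Prop := ∀ V ∈ F, ¬ V <:+: l

def EndsOnlyIn (W l : List α) : Prop :=
  W <:+ l ∧ ∀ V ∈ F, ∀ p s : List α, l = p ++ V ++ s → V = W ∧ s = []

def AvoidsBeforeLast (l : List α) : Prop := ∃ u a, l = u ++ [a] ∧ Avoids F u

def IsInfixAntichain : Prop := ∀ W ∈ F, ∀ V ∈ F, V ≠ W → ¬ V <:+: W

variable {F}

theorem eq_nil_of_not_infix_of_concat_eq {V u p s : List α} {a : α} (hV : ¬ V <:+: u)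
    (h : u ++ [a] = p ++ V ++ s) : s = [] := by
  obtain rfl | ⟨s, b, rfl⟩ := s.eq_nil_or_concat'
  · rfl
  · rw [← List.append_assoc, List.append_singleton_inj] at h
    exact absurd (h.1 ▸ List.infix_append p V s) hV

theorem Avoids.of_concat {u : List α} {a : α} (h : Avoids F (u ++ [a])) : Avoids F u :=
  fun V hV hVu => h V hV (hVu.trans (List.prefix_append u [a]).isInfix)

theorem EndsOnlyIn.not_avoids {W l : List α} (hW : W ∈ F) (h : EndsOnlyIn F W l) :
    ¬ Avoids F l :=
  fun hl => hl W hW h.1.isInfix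

theorem EndsOnlyIn.eq_of_suffix {W V l : List α} (h : EndsOnlyIn F W l) (hV : V ∈ F)
    (hVl : V <:+ l) : V = W := by
  obtain ⟨p, rfl⟩ := hVl
  exact (h.2 V hV p [] (List.append_nil _).symm).1

theorem EndsOnlyIn.avoids_of_concat {W u : List α} {a : α} (h : EndsOnlyIn F W (u ++ [a])) :
    Avoids F u := by
  rintro V hV ⟨p, t, rfl⟩
  simpa using (h.2 V hV p (t ++ [a]) (by simp)).2

theorem endsOnlyIn_of_suffix (hred : IsInfixAntichain F)
    {W u : List α} {a : α} (hu : Avoids F u) (hW : W ∈ F) (hWu : W <:+ u ++ [a]) :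
    EndsOnlyIn F W (u ++ [a]) := by
  refine ⟨hWu, fun V hV p s h => ?_⟩
  obtain rfl := eq_nil_of_not_infix_of_concat_eq (hu V hV) h
  refine ⟨?_, rfl⟩
  by_contra hVW
  rcases List.suffix_or_suffix_of_suffix ⟨p, by simpa using h.symm⟩ hWu with hs | hs
  · exact hred W hW V hV hVW hs.isInfix
  · exact hred V hV W hW (Ne.symm hVW) hs.isInfix

theorem avoids_iff_avoids_concat_or (hred : IsInfixAntichain F)
    (u : List α) (a : α) :
    Avoids F u ↔ Avoids F (u ++ [a]) ∨ ∃ W ∈ F, EndsOnlyIn F W (u ++ [a]) := by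
  refine ⟨fun hu => ?_, ?_⟩
  · by_contra! h
    obtain ⟨W, hW, hWua⟩ : ∃ W ∈ F, W <:+: u ++ [a] := by simpa [Avoids] using h.1
    obtain ⟨p, s, hps⟩ := hWua
    obtain rfl := eq_nil_of_not_infix_of_concat_eq (hu W hW) hps.symm
    exact h.2 W hW (endsOnlyIn_of_suffix hred hu hW ⟨p, by simpa using hps⟩)
  · rintro (h | ⟨W, -, h⟩)
    · exact h.of_concat
    · exact h.avoids_of_concat

end Occurrences

section Counting

variable {F : Finset (List α)}

theorem avoidsBeforeLast_concat_iff {u : List α} {a : α} :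
    AvoidsBeforeLast F (u ++ [a]) ↔ Avoids F u := by
  simp only [AvoidsBeforeLast, List.append_singleton_inj]
  constructor
  · rintro ⟨v, b, ⟨rfl, rfl⟩, hv⟩
    exact hv
  · exact fun hu => ⟨u, a, ⟨rfl, rfl⟩, hu⟩

theorem avoidsBeforeLast_iff (hred : IsInfixAntichain F) {l : List α}
    (hl : l ≠ []) : AvoidsBeforeLast F l ↔ Avoids F l ∨ ∃ W ∈ F, EndsOnlyIn F W l := by
  obtain ⟨u, a, rfl⟩ := (l.eq_nil_or_concat').resolve_left hl
  rw [avoidsBeforeLast_concat_iff, avoids_iff_avoids_concat_or hred]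

variable {w : α → ℕ}

theorem setOf_avoidsBeforeLast_eq_union (hred : IsInfixAntichain F)
    {n : ℕ} (hn : 1 ≤ n) :
    {l | wt w l = n ∧ AvoidsBeforeLast F l} =
      {l | wt w l = n ∧ Avoids F l} ∪ ⋃ W ∈ F, {l | wt w l = n ∧ EndsOnlyIn F W l} := by
  ext l
  by_cases hl : wt w l = n
  · have hl_ne_nil : l ≠ [] := by
      rintro rfl
      simp only [wt_nil] at hl
      omega
    simp [hl, avoidsBeforeLast_iff hred hl_ne_nil]
  · simp [hl]

theorem ncard_avoidsBeforeLast_eq_add_sum [Finite α] (hw : ∀ a, 0 < w a)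
    (hred : IsInfixAntichain F) {n : ℕ} (hn : 1 ≤ n) :
    {l | wt w l = n ∧ AvoidsBeforeLast F l}.ncard = fCount w F n + ∑ W ∈ F, fWCount w F W n := by
  have hfin (P : List α → Prop) : {l | wt w l = n ∧ P l}.Finite :=
    (finite_setOf_wt_eq hw n).subset fun _ hl => hl.1
  have hdisj : Disjoint {l | wt w l = n ∧ Avoids F l}
      (⋃ W ∈ F, {l | wt w l = n ∧ EndsOnlyIn F W l}) := by
    rw [Set.disjoint_left]
    rintro l ⟨-, hl⟩ hlW
    obtain ⟨W, hW, -, hlW⟩ := Set.mem_iUnion₂.1 hlW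
    exact hlW.not_avoids hW hl
  have hpair : (F : Set (List α)).PairwiseDisjoint
      fun W => {l | wt w l = n ∧ EndsOnlyIn F W l} := by
    intro W _ V hV hWV
    exact Set.disjoint_left.2 fun l hlW hlV => hWV (hlW.2.eq_of_suffix hV hlV.2.1).symm
  rw [setOf_avoidsBeforeLast_eq_union hred hn, Set.ncard_union_eq hdisj (hfin _)
    ((F : Set (List α)).toFinite.biUnion fun _ _ => hfin _), ← Finset.set_biUnion_coe,
    Set.Finite.ncard_biUnion F.finite_toSet (fun _ _ => hfin _) hpair, finsum_mem_coe_finset]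
  rfl

theorem setOf_avoidsBeforeLast_eq_iUnion (n : ℕ) :
    {l | wt w l = n ∧ AvoidsBeforeLast F l} =
      ⋃ a, (· ++ [a]) '' {u | wt w u + w a = n ∧ Avoids F u} := by
  ext l
  simp only [AvoidsBeforeLast, Set.mem_ofPred_eq, Set.mem_iUnion, Set.mem_image]
  constructor
  · rintro ⟨rfl, u, a, rfl, hu⟩
    exact ⟨a, u, ⟨by simp, hu⟩, rfl⟩
  · rintro ⟨a, u, ⟨hn, hu⟩, rfl⟩
    exact ⟨by simpa using hn, u, a, rfl, hu⟩

theorem ncard_avoidsBeforeLast_eq_sum [Fintype α] (hw : ∀ a, 0 < w a) (n : ℕ) :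
    {l | wt w l = n ∧ AvoidsBeforeLast F l}.ncard =
      ∑ a, if w a ≤ n then fCount w F (n - w a) else 0 := by
  set S : α → Set (List α) := fun a => (· ++ [a]) '' {u | wt w u + w a = n ∧ Avoids F u}
  have hfin (a : α) : (S a).Finite :=
    ((finite_setOf_wt_eq hw (n - w a)).subset
      fun u hu => show wt w u = n - w a by have := hu.1; omega).image _
  have hdisj : Pairwise (Function.onFun Disjoint S) := by
    intro a b hab
    refine Set.disjoint_left.2 ?_
    rintro _ ⟨u, -, rfl⟩ ⟨v, -, h⟩
    exact hab (List.append_singleton_inj.1 h).2.symm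
  rw [setOf_avoidsBeforeLast_eq_iUnion, Set.ncard_iUnion_of_finite hfin hdisj,
    finsum_eq_sum_of_fintype]
  refine Finset.sum_congr rfl fun a _ => ?_
  rw [Set.ncard_image_of_injective _ (List.append_left_injective [a]), ncard_setOf_wt_add_eq]
  rfl

end Counting

theorem stmt16_general (w : Ω → ℕ) (hw : ∀ s, 0 < w s) (F : Finset (List Ω))
    (hred : ∀ W ∈ F, ∀ V ∈ F, V ≠ W → ¬ V <:+: W) :
    ∀ n : ℕ, 1 ≤ n →
      fCount w F n + ∑ W ∈ F, fWCount w F W n =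
        ∑ s : Ω, if w s ≤ n then fCount w F (n - w s) else 0 := by
  intro n hn
  rw [← ncard_avoidsBeforeLast_eq_add_sum hw hred hn, ncard_avoidsBeforeLast_eq_sum hw]

theorem stmt16 (w : Ω → ℕ) (hw : ∀ s, 0 < w s) (F : Finset (List Ω))
    (hne : ∀ W ∈ F, W ≠ [])
    (hred : ∀ W ∈ F, ∀ V ∈ F, V ≠ W → ¬ V <:+: W) :
    ∀ n : ℕ, 1 ≤ n →
      fCount w F n + ∑ W ∈ F, fWCount w F W n =
        ∑ s : Ω, if w s ≤ n then fCount w F (n - w s) else 0 :=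
  stmt16_general w hw F hred
end
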